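/- arXiv:1002.3026 — 3 statements merged into one kernel-verified Lean document; each statement's English description precedes it below -/
import Mathlib

section
/- With the Gaeta–Diesel setup below, if i ∈ B̄ (i.e. 3 ≤ i ≤ 2n+1 and θ ≤ d_i + d_{2n+4−i}), then ν_{d_i} = e(d_i); in other words, the number of indices j with d_j = d_i equals −Δ²H(d_i). (Part a) of Proposition 1.7 of the paper.) -/
/-!
Write `t = d i`. The Gaeta–Diesel inequality for the pair `(2, 2n+1)` and `i ∈ B̄` give `d 2 < t`,
so the last index `k` with `d k < t` satisfies `k ≥ 2` and `d (k+1) = t`; exactly `k` indices have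
`d j < t`. The Gaeta–Diesel inequality for the pair `(k+1, 2n+2-k)` together with `i ∈ B̄` shows
that `θ - d j ≤ t` holds exactly for `j ≥ 2n+3-k`, i.e. for `k - 1` indices.
Hence `e(t) = (k + ν_t) - (k - 1) - 1 = ν_t`.
-/

open Finset

section Threshold

variable {N k : ℕ} {d : ℕ → ℤ} {s : ℤ}

theorem card_filter_lt_of_monotoneOn (hd : MonotoneOn d (Set.Icc 1 N)) (hkN : k ≤ N)
    (hlt : d k < s) (hle : s ≤ d (k + 1)) :
    #{j ∈ Icc 1 N | d j < s} = k := by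
  suffices {j ∈ Icc 1 N | d j < s} = Icc 1 k by rw [this, Nat.card_Icc, Nat.add_sub_cancel]
  ext j
  simp only [mem_filter, mem_Icc]
  constructor
  · rintro ⟨⟨hj1, hjN⟩, hjs⟩
    refine ⟨hj1, ?_⟩
    by_contra! hkj
    have : d (k + 1) ≤ d j := hd ⟨by omega, by omega⟩ ⟨hj1, hjN⟩ hkj
    omega
  · rintro ⟨hj1, hjk⟩
    have : d j ≤ d k := hd ⟨hj1, by omega⟩ ⟨by omega, hkN⟩ hjk
    exact ⟨⟨hj1, by omega⟩, by omega⟩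

theorem card_filter_le_of_monotoneOn (hd : MonotoneOn d (Set.Icc 1 N)) (hkN : k ≤ N)
    (hlt : d k < s) (hle : s ≤ d (k + 1)) :
    #{j ∈ Icc 1 N | s ≤ d j} = N - k := by
  have h := card_filter_add_card_filter_not (s := Icc 1 N) (fun j => d j < s)
  simp only [not_lt, Nat.card_Icc, Nat.add_sub_cancel,
    card_filter_lt_of_monotoneOn hd hkN hlt hle] at h
  omega

theorem exists_last_lt_of_monotoneOn (hd : MonotoneOn d (Set.Icc 1 N)) {j i : ℕ}
    (hji : j ≤ i) (hiN : i ≤ N) (hlt : d j < d i) :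
    ∃ k, j ≤ k ∧ k < i ∧ d k < d i ∧ d (k + 1) = d i := by
  set k := Nat.findGreatest (fun k => d k < d i) i
  have hdk : d k < d i := Nat.findGreatest_spec (P := fun k => d k < d i) hji hlt
  have hjk : j ≤ k := Nat.le_findGreatest (P := fun k => d k < d i) hji hlt
  have hki : k < i :=
    lt_of_le_of_ne (Nat.findGreatest_le i) fun h => by rw [h] at hdk; exact hdk.false
  have hnext : ¬ d (k + 1) < d i := Nat.findGreatest_is_greatest (Nat.lt_succ_self k) hki
  have hle : d (k + 1) ≤ d i := hd ⟨by omega, by omega⟩ ⟨by omega, hiN⟩ hki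
  exact ⟨k, hjk, hki, hdk, le_antisymm hle (not_lt.1 hnext)⟩

end Threshold

theorem card_filter_le_eq_card_filter_lt_add_card_filter_eq {ι α : Type*} [LinearOrder α]
    (s : Finset ι) (f : ι → α) (t : α) :
    #{j ∈ s | f j ≤ t} = #{j ∈ s | f j < t} + #{j ∈ s | f j = t} := by
  classical
  rw [← card_union_of_disjoint (disjoint_filter.2 fun _ _ h => h.ne), ← filter_or]
  simp only [le_iff_lt_or_eq]

theorem add_lt_of_gaetaDiesel {n : ℕ} {d : ℕ → ℤ} {θ : ℤ}
    (hGD : ∀ i, 1 ≤ i → i ≤ n → d (i + 1) + d (2 * n + 2 - i) < θ)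
    {a b : ℕ} (ha : 2 ≤ a) (hb : 2 ≤ b) (hab : a + b = 2 * n + 3) : d a + d b < θ := by
  wlog hle : a ≤ b generalizing a b
  · rw [add_comm]; exact this hb ha (by omega) (by omega)
  obtain ⟨c, rfl⟩ : ∃ c, a = c + 1 := ⟨a - 1, by omega⟩
  have hb' : 2 * n + 2 - c = b := by omega
  simpa only [hb'] using hGD c (by omega) (by omega)

theorem stmt_1_general (n : ℕ) (d : ℕ → ℤ) (θ : ℤ)
    (hmono : ∀ j k, 1 ≤ j → j ≤ k → k ≤ 2 * n + 1 → d j ≤ d k)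
    (hGD : ∀ i, 1 ≤ i → i ≤ n → d (i + 1) + d (2 * n + 2 - i) < θ)
    (i : ℕ) (hi3 : 3 ≤ i) (hi : i ≤ 2 * n + 1)
    (hiB : θ ≤ d i + d (2 * n + 4 - i)) :
    (((Finset.Icc 1 (2 * n + 1)).filter (fun j => d j = d i)).card : ℤ) =
      (((Finset.Icc 1 (2 * n + 1)).filter (fun j => d j ≤ d i)).card : ℤ) -
        (((Finset.Icc 1 (2 * n + 1)).filter (fun j => θ - d j ≤ d i)).card : ℤ) - 1 := by
  have hd : MonotoneOn d (Set.Icc 1 (2 * n + 1)) := fun j hj k hk hjk => hmono j k hj.1 hjk hk.2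
  have hd2 : d 2 < d i := by
    have := add_lt_of_gaetaDiesel hGD (a := 2) (b := 2 * n + 1) le_rfl (by omega) (by omega)
    have := hmono (2 * n + 4 - i) (2 * n + 1) (by omega) (by omega) le_rfl
    linarith
  obtain ⟨k, hk2, hki, hdk, hdk1⟩ := exists_last_lt_of_monotoneOn hd (by omega) hi hd2
  have hlow : #{j ∈ Icc 1 (2 * n + 1) | d j < d i} = k :=
    card_filter_lt_of_monotoneOn hd (by omega) hdk hdk1.ge
  have hhigh : #{j ∈ Icc 1 (2 * n + 1) | θ - d j ≤ d i} = 2 * n + 1 - (2 * n + 2 - k) := by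
    rw [filter_congr fun j _ => sub_le_comm]
    refine card_filter_le_of_monotoneOn hd (by omega) ?_ ?_
    · have := add_lt_of_gaetaDiesel hGD (a := k + 1) (b := 2 * n + 2 - k) (by omega) (by omega)
        (by omega)
      linarith
    · have := hmono (2 * n + 4 - i) (2 * n + 2 - k + 1) (by omega) (by omega) (by omega)
      linarith
  rw [card_filter_le_eq_card_filter_lt_add_card_filter_eq, hlow, hhigh]
  push_cast
  omega

/-- Proposition 1.7 a): with the Gaeta–Diesel setup, if `i ∈ B̄`
(i.e. `3 ≤ i ≤ 2n+1` and `θ ≤ d i + d (2n+4-i)`), then the number of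
indices `j` with `d j = d i` equals
`e(d i) = #{j : d j ≤ d i} - #{j : θ - d j ≤ d i} - 1 (= -Δ²H(d i))`. -/
theorem stmt_1 (n : ℕ) (hn : 1 ≤ n) (d : ℕ → ℤ) (θ : ℤ)
    (hpos : ∀ j, 1 ≤ j → j ≤ 2 * n + 1 → 0 < d j)
    (hθpos : 0 < θ)
    (hmono : ∀ j k, 1 ≤ j → j ≤ k → k ≤ 2 * n + 1 → d j ≤ d k)
    (hsum : (n : ℤ) * θ = ∑ j ∈ Finset.Icc 1 (2 * n + 1), d j)
    (hGD : ∀ i, 1 ≤ i → i ≤ n → d (i + 1) + d (2 * n + 2 - i) < θ)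
    (i : ℕ) (hi3 : 3 ≤ i) (hi : i ≤ 2 * n + 1)
    (hiB : θ ≤ d i + d (2 * n + 4 - i)) :
    (((Finset.Icc 1 (2 * n + 1)).filter (fun j => d j = d i)).card : ℤ) =
      (((Finset.Icc 1 (2 * n + 1)).filter (fun j => d j ≤ d i)).card : ℤ) -
        (((Finset.Icc 1 (2 * n + 1)).filter (fun j => θ - d j ≤ d i)).card : ℤ) - 1 :=
  stmt_1_general n d θ hmono hGD i hi3 hi hiB
end

section
/- With the Gaeta–Diesel setup below, if i, j ∈ B̄ and d_i = d_j, then i = j; that is, distinct indices in B̄ carry distinct degree values. (Part c) of Proposition 1.7 of the paper.) -/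
/-! The Gaeta–Diesel inequalities say that `d s + d t < θ` whenever `2 ≤ s, t` and `s + t = 2n + 3`;
by monotonicity this persists for `s + t ≤ 2n + 3`. If `i < j` both lie in `B̄` with `d i = d j`,
then `i` and `2n + 4 - j` form such a pair, yet `d i + d (2n + 4 - j) = d j + d (2n + 4 - j) ≥ θ`. -/

lemma add_lt_of_index_add_eq {α : Type*} [AddCommMagma α] [LT α] {n : ℕ} {d : ℕ → α} {θ : α}
    (hGD : ∀ i, 1 ≤ i → i ≤ n → d (i + 1) + d (2 * n + 2 - i) < θ)
    {s t : ℕ} (hs : 2 ≤ s) (ht : 2 ≤ t) (hst : s + t = 2 * n + 3) :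
    d s + d t < θ := by
  rcases le_total s t with hle | hle
  · have h := hGD (s - 1) (by omega) (by omega)
    rwa [show s - 1 + 1 = s by omega, show 2 * n + 2 - (s - 1) = t by omega] at h
  · have h := hGD (t - 1) (by omega) (by omega)
    rwa [show t - 1 + 1 = t by omega, show 2 * n + 2 - (t - 1) = s by omega, add_comm] at h

lemma add_lt_of_index_add_le {α : Type*} [AddCommMonoid α] [PartialOrder α] [IsOrderedAddMonoid α]
    {n : ℕ} {d : ℕ → α} {θ : α}
    (hmono : ∀ j k, 1 ≤ j → j ≤ k → k ≤ 2 * n + 1 → d j ≤ d k)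
    (hGD : ∀ i, 1 ≤ i → i ≤ n → d (i + 1) + d (2 * n + 2 - i) < θ)
    {s t : ℕ} (hs : 2 ≤ s) (ht : 2 ≤ t) (hst : s + t ≤ 2 * n + 3) :
    d s + d t < θ :=
  calc d s + d t ≤ d s + d (2 * n + 3 - s) :=
        add_le_add_right (hmono t (2 * n + 3 - s) (by omega) (by omega) (by omega)) _
    _ < θ := add_lt_of_index_add_eq hGD hs (by omega) (by omega)

theorem stmt_3_general (n : ℕ) (d : ℕ → ℤ) (θ : ℤ)
    (hmono : ∀ j k, 1 ≤ j → j ≤ k → k ≤ 2 * n + 1 → d j ≤ d k)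
    (hGD : ∀ i, 1 ≤ i → i ≤ n → d (i + 1) + d (2 * n + 2 - i) < θ)
    (i j : ℕ)
    (hiB : 3 ≤ i ∧ i ≤ 2 * n + 1 ∧ θ ≤ d i + d (2 * n + 4 - i))
    (hjB : 3 ≤ j ∧ j ≤ 2 * n + 1 ∧ θ ≤ d j + d (2 * n + 4 - j))
    (hij : d i = d j) :
    i = j := by
  obtain ⟨hi3, hi, hiθ⟩ := hiB
  obtain ⟨hj3, hj, hjθ⟩ := hjB
  rcases lt_trichotomy i j with h | h | h
  · have hlt : d i + d (2 * n + 4 - j) < θ :=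
      add_lt_of_index_add_le hmono hGD (by omega) (by omega) (by omega)
    omega
  · exact h
  · have hlt : d j + d (2 * n + 4 - i) < θ :=
      add_lt_of_index_add_le hmono hGD (by omega) (by omega) (by omega)
    omega

/-- Proposition 1.7 c): with the Gaeta–Diesel setup, if `i, j ∈ B̄` and
`d i = d j`, then `i = j`. -/
theorem stmt_3 (n : ℕ) (hn : 1 ≤ n) (d : ℕ → ℤ) (θ : ℤ)
    (hpos : ∀ j, 1 ≤ j → j ≤ 2 * n + 1 → 0 < d j)
    (hθpos : 0 < θ)
    (hmono : ∀ j k, 1 ≤ j → j ≤ k → k ≤ 2 * n + 1 → d j ≤ d k)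
    (hsum : (n : ℤ) * θ = ∑ j ∈ Finset.Icc 1 (2 * n + 1), d j)
    (hGD : ∀ i, 1 ≤ i → i ≤ n → d (i + 1) + d (2 * n + 2 - i) < θ)
    (i j : ℕ)
    (hiB : 3 ≤ i ∧ i ≤ 2 * n + 1 ∧ θ ≤ d i + d (2 * n + 4 - i))
    (hjB : 3 ≤ j ∧ j ≤ 2 * n + 1 ∧ θ ≤ d j + d (2 * n + 4 - j))
    (hij : d i = d j) :
    i = j :=
  stmt_3_general n d θ hmono hGD i j hiB hjB hij
end

section
/- Let m ≥ 2, let γ_1 ≤ γ_2 ≤ ⋯ ≤ γ_{2m+1} be positive integers and θ a positive integer satisfying the Gaeta–Diesel conditions: mθ = γ_1 + ⋯ + γ_{2m+1} and θ > γ_{i+1} + γ_{2m+2−i} for all 1 ≤ i ≤ m. Suppose that the set B_Γ := {h : 3 ≤ h ≤ m+1 and θ ≤ γ_h + γ_{2m+4−h}} consists of exactly one element b. Then for every index c with b ≤ c ≤ m+1 one has γ_{c+1} < γ_{2m+4−b}. (This is the key combinatorial step in the proof of Lemma 3.5 of the paper, ruling out γ_{c+1} = γ_{2m+4−b} via the forced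 degeneration c = b = m+1, γ_{m+2} = γ_{m+3}, which contradicts θ > γ_{m+1} + γ_{m+2}.) -/
/-!
Suppose `γ (c+1) ≥ γ (2m+4-b)`. Since `γ p ≥ γ b` for every index `p ≥ b`, every pair
`(c+1, p)` with `p ≥ b` inherits the inequality `θ ≤ γ b + γ (2m+4-b)`. For `c ≤ m`, taking
`p = 2m+3-c` puts `c+1 > b` into `B_Γ`, contradicting `B_Γ = {b}`; for `c = m+1`, taking
`p = m+1` gives `θ ≤ γ (m+1) + γ (m+2)`, contradicting the Gaeta–Diesel condition for `i = m`.
-/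

theorem apply_succ_lt_of_unique_theta_le {γ : ℕ → ℤ} {θ : ℤ} {m b c : ℕ}
    (hγ : MonotoneOn γ (Set.Icc 1 (2 * m + 1))) (hGD : γ (m + 1) + γ (m + 2) < θ)
    (hb3 : 3 ≤ b) (hb : b ≤ m + 1) (hbB : θ ≤ γ b + γ (2 * m + 4 - b))
    (hbuniq : ∀ h, 3 ≤ h → h ≤ m + 1 → θ ≤ γ h + γ (2 * m + 4 - h) → h = b)
    (hbc : b ≤ c) (hcm : c ≤ m + 1) :
    γ (c + 1) < γ (2 * m + 4 - b) := by
  by_contra! hle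
  have hpair : ∀ p, b ≤ p → p ≤ 2 * m + 1 → θ ≤ γ (c + 1) + γ p := fun p hbp hpm => by
    have : γ b ≤ γ p := hγ ⟨by omega, by omega⟩ ⟨by omega, hpm⟩ hbp
    linarith
  rcases Nat.lt_or_ge c (m + 1) with hc | hc
  · have := hbuniq (c + 1) (by omega) (by omega) (hpair _ (by omega) (by omega))
    omega
  · obtain rfl : c = m + 1 := by omega
    linarith [hpair (m + 1) hb (by omega)]

theorem stmt_9_general (m : ℕ) (γ : ℕ → ℤ) (θ : ℤ)
    (hmono : ∀ j k, 1 ≤ j → j ≤ k → k ≤ 2 * m + 1 → γ j ≤ γ k)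
    (hGD : ∀ i, 1 ≤ i → i ≤ m → γ (i + 1) + γ (2 * m + 2 - i) < θ)
    (b : ℕ) (hb3 : 3 ≤ b) (hb : b ≤ m + 1) (hbB : θ ≤ γ b + γ (2 * m + 4 - b))
    (hbuniq : ∀ h, 3 ≤ h → h ≤ m + 1 → θ ≤ γ h + γ (2 * m + 4 - h) → h = b) :
    ∀ c, b ≤ c → c ≤ m + 1 → γ (c + 1) < γ (2 * m + 4 - b) := by
  have hγ : MonotoneOn γ (Set.Icc 1 (2 * m + 1)) := fun j hj k hk hjk => hmono j k hj.1 hjk hk.2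
  have hGDm : γ (m + 1) + γ (m + 2) < θ := by
    simpa [show 2 * m + 2 - m = m + 2 by omega] using hGD m (by omega) le_rfl
  exact fun c hbc hcm => apply_succ_lt_of_unique_theta_le hγ hGDm hb3 hb hbB hbuniq hbc hcm

/-- Key combinatorial step in the proof of Lemma 3.5: with the Gaeta–Diesel
setup for `γ_1 ≤ ⋯ ≤ γ_{2m+1}` and `θ`, if the set
`B_Γ = {h : 3 ≤ h ≤ m+1, θ ≤ γ h + γ (2m+4-h)}` consists of exactly one
element `b`, then for every `c` with `b ≤ c ≤ m+1` one has
`γ (c+1) < γ (2m+4-b)`. -/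
theorem stmt_9 (m : ℕ) (hm : 2 ≤ m) (γ : ℕ → ℤ) (θ : ℤ)
    (hpos : ∀ j, 1 ≤ j → j ≤ 2 * m + 1 → 0 < γ j)
    (hθpos : 0 < θ)
    (hmono : ∀ j k, 1 ≤ j → j ≤ k → k ≤ 2 * m + 1 → γ j ≤ γ k)
    (hsum : (m : ℤ) * θ = ∑ j ∈ Finset.Icc 1 (2 * m + 1), γ j)
    (hGD : ∀ i, 1 ≤ i → i ≤ m → γ (i + 1) + γ (2 * m + 2 - i) < θ)
    (b : ℕ) (hb3 : 3 ≤ b) (hb : b ≤ m + 1) (hbB : θ ≤ γ b + γ (2 * m + 4 - b))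
    (hbuniq : ∀ h, 3 ≤ h → h ≤ m + 1 → θ ≤ γ h + γ (2 * m + 4 - h) → h = b) :
    ∀ c, b ≤ c → c ≤ m + 1 → γ (c + 1) < γ (2 * m + 4 - b) :=
  stmt_9_general m γ θ hmono hGD b hb3 hb hbB hbuniq
end
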